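/- Let H be a Hopf algebra over a field k with antipode S, and A a left H-module algebra. A right ideal I of A belongs to E'_H if and only if for every finite-dimensional subcoalgebra C of H, the right ideal I_{S(C)} = {x ∈ A : S(C)x ⊆ I} is an essential right ideal of A. Moreover, if I ∈ E'_H then I_{S(C)} ∈ E'_H for every finite-dimensional subcoalgebra C. -/

import Mathlib

set_option linter.unnecessarySimpa false

open TensorProduct

def IsModuleAlgebra (k : Type*) [Field k] {H A : Type*} [Ring H] [HopfAlgebra k H]
    [Ring A] [Algebra k A] (act : H →ₗ[k] A →ₗ[k] A) : Prop :=
  (∀ g h : H, act (g * h) = (act g) ∘ₗ (act h)) ∧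
  (act 1 = LinearMap.id) ∧
  (∀ (h : H) (a b : A),
    act h (a * b) =
      LinearMap.mul' k A ((TensorProduct.map (act.flip a) (act.flip b))
        (Coalgebra.comul h))) ∧
  (∀ h : H, act h 1 = Coalgebra.counit (R := k) h • (1 : A))

/-- A subset of a ring `A` is a right ideal. -/
def IsRightIdeal {A : Type*} [Ring A] (I : Set A) : Prop :=
  (0 : A) ∈ I ∧ (∀ x ∈ I, ∀ y ∈ I, x + y ∈ I) ∧ (∀ x ∈ I, ∀ a : A, x * a ∈ I)

/-- An essential right ideal: a right ideal meeting every nonzero right ideal nontrivially. -/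
def IsEssentialRightIdeal {A : Type*} [Ring A] (I : Set A) : Prop :=
  IsRightIdeal I ∧
    ∀ J : Set A, IsRightIdeal J → (∃ y ∈ J, y ≠ 0) → ∃ x ∈ I, x ∈ J ∧ x ≠ 0

/-- The filter `E'_H`: right ideals `I` of `A` such that for each `h ∈ S(H)` there is an
essential right ideal `J` of `A` with `h ⊳ J ⊆ I`. -/
def MemEH (k : Type*) [Field k] {H A : Type*} [Ring H] [HopfAlgebra k H]
    [Ring A] [Algebra k A] (act : H →ₗ[k] A →ₗ[k] A) (I : Set A) : Prop :=
  IsRightIdeal I ∧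
    ∀ h : H, (∃ g : H, HopfAlgebra.antipode (R := k) g = h) →
      ∃ J : Set A, IsEssentialRightIdeal J ∧ ∀ x ∈ J, act h x ∈ I

/-- `C` is a subcoalgebra of the coalgebra `H`. -/
def IsSubcoalgebra (k : Type*) [Field k] {H : Type*} [Ring H] [HopfAlgebra k H]
    (C : Submodule k H) : Prop :=
  ∀ c ∈ C, Coalgebra.comul (R := k) c ∈
    LinearMap.range (TensorProduct.map C.subtype C.subtype)

/-- `I_{S(C)} = {x ∈ A | S(C) x ⊆ I}`. -/
def IscSet (k : Type*) [Field k] {H A : Type*} [Ring H] [HopfAlgebra k H]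
    [Ring A] [Algebra k A] (act : H →ₗ[k] A →ₗ[k] A) (I : Set A)
    (C : Submodule k H) : Set A :=
  {x : A | ∀ c ∈ C, act (HopfAlgebra.antipode (R := k) c) x ∈ I}

open TensorProduct Coalgebra

section ConvFramework

variable {k : Type*} [CommSemiring k] {H : Type*} [AddCommMonoid H] [Module k H]
  [Coalgebra k H] {L : Type*} [Semiring L] [Algebra k L]

/-- Convolution product on `Hom(H, L)`. -/
noncomputable def conv (f g : H →ₗ[k] L) : H →ₗ[k] L :=
  LinearMap.mul' k L ∘ₗ TensorProduct.map f g ∘ₗ Coalgebra.comul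

lemma conv_apply_repr (f g : H →ₗ[k] L) {a : H} {ι : Type*} (r : Coalgebra.Repr k a ι) :
    conv f g a = ∑ i ∈ r.index, f (r.left i) * g (r.right i) := by
  simp only [conv, LinearMap.comp_apply, ← r.eq, map_sum, TensorProduct.map_tmul,
    LinearMap.mul'_apply]

/-- The unit for convolution. -/
noncomputable def cunit : H →ₗ[k] L := Algebra.linearMap k L ∘ₗ Coalgebra.counit

lemma cunit_apply (a : H) : (cunit : H →ₗ[k] L) a = Coalgebra.counit (R := k) a • (1 : L) := by
  simp [cunit, Algebra.smul_def]

lemma sum_counit_smul_eq {a : H} {ι : Type*} (r : Coalgebra.Repr k a ι) :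
    ∑ i ∈ r.index, Coalgebra.counit (R := k) (r.left i) • r.right i = a := by
  have h := congrArg (TensorProduct.lid k H) (Coalgebra.sum_counit_tmul_eq r)
  rw [map_sum] at h
  simp only [TensorProduct.lid_tmul] at h
  simpa using h

lemma sum_smul_counit_eq {a : H} {ι : Type*} (r : Coalgebra.Repr k a ι) :
    ∑ i ∈ r.index, Coalgebra.counit (R := k) (r.right i) • r.left i = a := by
  have h := congrArg (TensorProduct.rid k H) (Coalgebra.sum_tmul_counit_eq r)
  rw [map_sum] at h
  simp only [TensorProduct.rid_tmul] at h
  simpa using h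

lemma cunit_conv (f : H →ₗ[k] L) : conv cunit f = f := by
  ext a
  rw [conv_apply_repr _ _ (ℛ k a)]
  simp only [cunit_apply, smul_mul_assoc, one_mul, ← map_smul, ← map_sum,
    sum_counit_smul_eq]

lemma conv_cunit (f : H →ₗ[k] L) : conv f cunit = f := by
  ext a
  rw [conv_apply_repr _ _ (ℛ k a)]
  simp only [cunit_apply, mul_smul_comm, mul_one, ← map_smul, ← map_sum,
    sum_smul_counit_eq]

lemma conv_assoc (f g h : H →ₗ[k] L) : conv (conv f g) h = conv f (conv g h) := by
  ext a
  set r := ℛ k a with hr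
  set r1 : (i : H × H) → Coalgebra.Repr k (r.left i) (H × H) := fun i => ℛ k (r.left i) with hr1
  set r2 : (i : H × H) → Coalgebra.Repr k (r.right i) (H × H) := fun i => ℛ k (r.right i) with hr2
  have key := Coalgebra.sum_map_tmul_tmul_eq (R := k) f g h a (repr := r) (a₁ := r1) (a₂ := r2)
  have key2 := congrArg (LinearMap.mul' k L ∘ₗ (LinearMap.mul' k L).lTensor L) key
  rw [map_sum, map_sum] at key2
  simp only [Finset.sum_congr, map_sum, LinearMap.comp_apply, LinearMap.lTensor_tmul,
    LinearMap.mul'_apply] at key2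
  rw [conv_apply_repr (conv f g) h r, conv_apply_repr f (conv g h) r]
  calc ∑ i ∈ r.index, conv f g (r.left i) * h (r.right i)
      = ∑ i ∈ r.index, ∑ j ∈ (r1 i).index,
          f ((r1 i).left j) * (g ((r1 i).right j) * h (r.right i)) := by
        refine Finset.sum_congr rfl fun i _ => ?_
        rw [conv_apply_repr _ _ (r1 i), Finset.sum_mul]
        exact Finset.sum_congr rfl fun j _ => by rw [mul_assoc]
    _ = ∑ i ∈ r.index, ∑ j ∈ (r2 i).index,
          f (r.left i) * (g ((r2 i).left j) * h ((r2 i).right j)) := key2.symm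
    _ = ∑ i ∈ r.index, f (r.left i) * conv g h (r.right i) := by
        refine Finset.sum_congr rfl fun i _ => ?_
        rw [conv_apply_repr _ _ (r2 i), Finset.mul_sum]

/-- Uniqueness of convolution inverses. -/
lemma conv_inv_unique {f g m : H →ₗ[k] L} (h1 : conv g m = cunit) (h2 : conv m f = cunit) :
    g = f := by
  have : conv g (conv m f) = conv (conv g m) f := (conv_assoc g m f).symm
  rw [h1, h2, conv_cunit, cunit_conv] at this
  exact this

end ConvFramework

open TensorProduct Coalgebra HopfAlgebra

section Hopf

variable {k : Type*} [CommSemiring k] {H : Type*} [Semiring H] [HopfAlgebra k H]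

local notation "S" => HopfAlgebra.antipode (R := k) (A := H)
local notation "Δ" => Coalgebra.comul (R := k) (A := H)
local notation "ε" => Coalgebra.counit (R := k) (A := H)

lemma antipode_one' : S (1 : H) = 1 := by
  have h := HopfAlgebra.mul_antipode_rTensor_comul_apply (R := k) (1 : H)
  rw [show Δ (1 : H) = 1 ⊗ₜ[k] 1 by
      simpa [Algebra.TensorProduct.one_def] using map_one (Bialgebra.comulAlgHom k H)] at h
  simpa using h

/-- Key identity: `∑ S(a₁) a₂ ⊗ a₃ = 1 ⊗ a` in the `1-(2 3)` grouping. -/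
lemma key1 {a : H} {ι : Type*} (r : Coalgebra.Repr k a ι) {ι' : Type*} (rr : (i : ι) → Coalgebra.Repr k (r.right i) ι') :
    ∑ i ∈ r.index, ∑ p ∈ (rr i).index,
      (S (r.left i) * (rr i).left p) ⊗ₜ[k] (rr i).right p = (1 : H) ⊗ₜ[k] a := by
  set V : H ⊗[k] H →ₗ[k] H := LinearMap.mul' k H ∘ₗ (HopfAlgebra.antipode (R := k)).rTensor H
    with hV
  have step1 : ∑ i ∈ r.index, ∑ p ∈ (rr i).index,
      (S (r.left i) * (rr i).left p) ⊗ₜ[k] (rr i).right p =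
      (V.rTensor H) ((TensorProduct.assoc k H H H).symm ((Δ).lTensor H (Δ a))) := by
    rw [← r.eq, map_sum, map_sum, map_sum]
    refine Finset.sum_congr rfl fun i _ => ?_
    rw [LinearMap.lTensor_tmul, ← (rr i).eq, TensorProduct.tmul_sum, map_sum, map_sum]
    refine Finset.sum_congr rfl fun p _ => ?_
    simp [hV]
  rw [step1, Coalgebra.coassoc_symm_apply, ← LinearMap.rTensor_comp_apply]
  have hVc : V ∘ₗ Δ = Algebra.linearMap k H ∘ₗ ε := by
    rw [hV, LinearMap.comp_assoc]
    exact HopfAlgebra.mul_antipode_rTensor_comul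
  rw [hVc, LinearMap.rTensor_comp_apply, ← r.eq, map_sum, map_sum]
  have : ∀ i ∈ r.index, (Algebra.linearMap k H).rTensor H
      ((ε).rTensor H (r.left i ⊗ₜ[k] r.right i)) =
      (1 : H) ⊗ₜ[k] ((ε (r.left i)) • r.right i) := by
    intro i _
    rw [LinearMap.rTensor_tmul, LinearMap.rTensor_tmul, Algebra.linearMap_apply,
      Algebra.algebraMap_eq_smul_one, TensorProduct.smul_tmul]
  rw [Finset.sum_congr rfl this, ← TensorProduct.tmul_sum]
  congr 1
  exact
    (by
      have h := congrArg (TensorProduct.lid k H) (Coalgebra.sum_counit_tmul_eq r)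
      rw [map_sum] at h
      simp only [TensorProduct.lid_tmul] at h
      simpa using h)

/-- Antipode is anti-multiplicative. -/
lemma antipode_mul' (a b : H) : S (a * b) = S b * S a := by
  classical
  set ra := ℛ k a; set rb := ℛ k b
  set raa : (i : H × H) → Coalgebra.Repr k (ra.right i) (H × H) := fun i => ℛ k (ra.right i)
  set rbb : (j : H × H) → Coalgebra.Repr k (rb.right j) (H × H) := fun j => ℛ k (rb.right j)
  set M : H := ∑ i ∈ ra.index, ∑ j ∈ rb.index, ∑ p ∈ (raa i).index, ∑ q ∈ (rbb j).index,
    S (rb.left j) * S (ra.left i) * (raa i).left p * (rbb j).left q *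
      S ((raa i).right p * (rbb j).right q) with hM
  have way1 : M = S b * S a := by
    rw [hM]
    have inner : ∀ i ∈ ra.index, ∀ j ∈ rb.index,
        ∑ p ∈ (raa i).index, ∑ q ∈ (rbb j).index,
          S (rb.left j) * S (ra.left i) * (raa i).left p * (rbb j).left q *
            S ((raa i).right p * (rbb j).right q) =
        (ε (ra.right i) * ε (rb.right j)) • (S (rb.left j) * S (ra.left i)) := by
      intro i _ j _
      set W : H ⊗[k] H →ₗ[k] H :=
        LinearMap.mul' k H ∘ₗ (HopfAlgebra.antipode (R := k)).lTensor H with hW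
      have hWc : W ∘ₗ Δ = Algebra.linearMap k H ∘ₗ ε := by
        rw [hW, LinearMap.comp_assoc]
        exact HopfAlgebra.mul_antipode_lTensor_comul
      have hprod : ∑ p ∈ (raa i).index, ∑ q ∈ (rbb j).index,
          ((raa i).left p * (rbb j).left q) ⊗ₜ[k] ((raa i).right p * (rbb j).right q) =
          Δ (ra.right i * rb.right j) := by
        rw [Bialgebra.comul_mul, ← (raa i).eq, ← (rbb j).eq, Finset.sum_mul_sum]
        simp [Algebra.TensorProduct.tmul_mul_tmul]
      have h2 := congrArg W hprod
      rw [map_sum] at h2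
      simp only [map_sum] at h2
      have h3 : W (Δ (ra.right i * rb.right j)) =
          (ε (ra.right i) * ε (rb.right j)) • (1 : H) := by
        have := congrArg (fun φ => φ (ra.right i * rb.right j)) hWc
        simpa [Bialgebra.counit_mul, Algebra.algebraMap_eq_smul_one] using this
      calc ∑ p ∈ (raa i).index, ∑ q ∈ (rbb j).index,
            S (rb.left j) * S (ra.left i) * (raa i).left p * (rbb j).left q *
              S ((raa i).right p * (rbb j).right q)
          = S (rb.left j) * S (ra.left i) *
              ∑ p ∈ (raa i).index, ∑ q ∈ (rbb j).index,
                W (((raa i).left p * (rbb j).left q) ⊗ₜ[k]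
                  ((raa i).right p * (rbb j).right q)) := by
            rw [Finset.mul_sum]
            refine Finset.sum_congr rfl fun p _ => ?_
            rw [Finset.mul_sum]
            refine Finset.sum_congr rfl fun q _ => ?_
            simp [hW, mul_assoc]
        _ = (ε (ra.right i) * ε (rb.right j)) • (S (rb.left j) * S (ra.left i)) := by
            rw [h2, h3, mul_smul_comm, mul_one]
    calc (∑ i ∈ ra.index, ∑ j ∈ rb.index, ∑ p ∈ (raa i).index, ∑ q ∈ (rbb j).index,
          S (rb.left j) * S (ra.left i) * (raa i).left p * (rbb j).left q *
            S ((raa i).right p * (rbb j).right q))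
        = ∑ i ∈ ra.index, ∑ j ∈ rb.index,
            (ε (ra.right i) * ε (rb.right j)) • (S (rb.left j) * S (ra.left i)) := by
          refine Finset.sum_congr rfl fun i hi => Finset.sum_congr rfl fun j hj => ?_
          exact inner i hi j hj
      _ = (∑ j ∈ rb.index, ε (rb.right j) • S (rb.left j)) *
            (∑ i ∈ ra.index, ε (ra.right i) • S (ra.left i)) := by
          rw [Finset.sum_mul_sum, Finset.sum_comm]
          refine Finset.sum_congr rfl fun i _ => Finset.sum_congr rfl fun j _ => ?_
          rw [smul_mul_smul_comm, mul_comm]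
      _ = S b * S a := by
          have ha : ∑ i ∈ ra.index, ε (ra.right i) • S (ra.left i) = S a := by
            rw [show (∑ i ∈ ra.index, ε (ra.right i) • S (ra.left i)) =
              S (∑ i ∈ ra.index, ε (ra.right i) • ra.left i) by
                rw [map_sum]; exact Finset.sum_congr rfl fun i _ => (map_smul _ _ _).symm]
            rw [sum_smul_counit_eq ra]
          have hb : ∑ j ∈ rb.index, ε (rb.right j) • S (rb.left j) = S b := by
            rw [show (∑ j ∈ rb.index, ε (rb.right j) • S (rb.left j)) =
              S (∑ j ∈ rb.index, ε (rb.right j) • rb.left j) by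
                rw [map_sum]; exact Finset.sum_congr rfl fun j _ => (map_smul _ _ _).symm]
            rw [sum_smul_counit_eq rb]
          rw [ha, hb]
  have way2 : M = S (a * b) := by
    rw [hM]
    calc (∑ i ∈ ra.index, ∑ j ∈ rb.index, ∑ p ∈ (raa i).index, ∑ q ∈ (rbb j).index,
          S (rb.left j) * S (ra.left i) * (raa i).left p * (rbb j).left q *
            S ((raa i).right p * (rbb j).right q))
        = ∑ j ∈ rb.index, ∑ q ∈ (rbb j).index,
            (LinearMap.mulLeft k (S (rb.left j)) ∘ₗ LinearMap.mul' k H ∘ₗ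
              TensorProduct.map (LinearMap.mulRight k ((rbb j).left q))
                ((HopfAlgebra.antipode (R := k)) ∘ₗ LinearMap.mulRight k ((rbb j).right q)))
            ((1 : H) ⊗ₜ[k] a) := by
          rw [Finset.sum_comm]
          refine Finset.sum_congr rfl fun j _ => ?_
          rw [Finset.sum_congr rfl (fun i (_ : i ∈ ra.index) => Finset.sum_comm),
            Finset.sum_comm]
          refine Finset.sum_congr rfl fun q _ => ?_
          rw [← key1 ra raa, map_sum]
          refine Finset.sum_congr rfl fun i _ => ?_
          rw [map_sum]
          refine Finset.sum_congr rfl fun p _ => ?_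
          simp only [LinearMap.comp_apply, TensorProduct.map_tmul, LinearMap.mul'_apply,
            LinearMap.mulLeft_apply, LinearMap.mulRight_apply]
          simp [mul_assoc]
      _ = ∑ j ∈ rb.index, ∑ q ∈ (rbb j).index,
            (LinearMap.mul' k H ∘ₗ TensorProduct.map LinearMap.id
              ((HopfAlgebra.antipode (R := k)) ∘ₗ LinearMap.mulLeft k a))
            ((S (rb.left j) * (rbb j).left q) ⊗ₜ[k] (rbb j).right q) := by
          refine Finset.sum_congr rfl fun j _ => Finset.sum_congr rfl fun q _ => ?_
          simp only [LinearMap.comp_apply, TensorProduct.map_tmul, LinearMap.mul'_apply,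
            LinearMap.mulLeft_apply, LinearMap.mulRight_apply, LinearMap.id_apply]
          rw [one_mul, mul_assoc]
      _ = S (a * b) := by
          set L' := LinearMap.mul' k H ∘ₗ TensorProduct.map LinearMap.id
              ((HopfAlgebra.antipode (R := k)) ∘ₗ LinearMap.mulLeft k a) with hL'
          have e : L' (∑ j ∈ rb.index, ∑ q ∈ (rbb j).index,
              (S (rb.left j) * (rbb j).left q) ⊗ₜ[k] (rbb j).right q) =
              ∑ j ∈ rb.index, ∑ q ∈ (rbb j).index,
                L' ((S (rb.left j) * (rbb j).left q) ⊗ₜ[k] (rbb j).right q) := by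
            rw [map_sum]
            exact Finset.sum_congr rfl fun j _ => map_sum _ _ _
          rw [← e, key1 rb rbb]
          simp [hL']
  rw [← way2, way1]

end Hopf

section Hopf2

variable {k : Type*} [CommSemiring k] {H : Type*} [Semiring H] [HopfAlgebra k H]

local notation "S" => HopfAlgebra.antipode (R := k) (A := H)
local notation "Δ" => Coalgebra.comul (R := k) (A := H)
local notation "ε" => Coalgebra.counit (R := k) (A := H)

noncomputable def Gmap : H →ₗ[k] H ⊗[k] H :=
  (TensorProduct.comm k H H).toLinearMap ∘ₗ TensorProduct.map
    (HopfAlgebra.antipode (R := k)) (HopfAlgebra.antipode (R := k)) ∘ₗ Coalgebra.comul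

lemma claim1 : conv (Coalgebra.comul : H →ₗ[k] H ⊗[k] H)
    (Coalgebra.comul ∘ₗ (HopfAlgebra.antipode (R := k))) = cunit := by
  ext a
  rw [conv_apply_repr _ _ (ℛ k a)]
  set r := ℛ k a
  calc ∑ i ∈ r.index, Δ (r.left i) * (Coalgebra.comul ∘ₗ HopfAlgebra.antipode (R := k)) (r.right i)
      = Δ (∑ i ∈ r.index, r.left i * S (r.right i)) := by
        rw [map_sum]
        exact Finset.sum_congr rfl fun i _ => by
          rw [LinearMap.comp_apply, ← Bialgebra.comul_mul]
    _ = cunit a := by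
        rw [HopfAlgebra.sum_mul_antipode_eq_smul r, map_smul, cunit_apply]
        congr 1
        simpa [Algebra.TensorProduct.one_def] using map_one (Bialgebra.comulAlgHom k H)

lemma claim2 : conv (Gmap : H →ₗ[k] H ⊗[k] H) Coalgebra.comul = cunit := by
  ext a
  rw [conv_apply_repr _ _ (ℛ k a)]
  set r := ℛ k a with hr
  set rl : (i : H × H) → Coalgebra.Repr k (r.left i) (H × H) := fun i => ℛ k (r.left i) with hrl
  set rr : (i : H × H) → Coalgebra.Repr k (r.right i) (H × H) := fun i => ℛ k (r.right i) with hrr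
  set rrl : (i : H × H) → (m : H × H) → Coalgebra.Repr k ((rr i).left m) (H × H) :=
    fun i m => ℛ k ((rr i).left m) with hrrl
  -- ψ c : H ⊗ (H ⊗ H) ⊗ ... regrouping with c on the left
  set ψ : H → (H ⊗[k] (H ⊗[k] H)) →ₗ[k] ((H ⊗[k] H) ⊗[k] (H ⊗[k] H)) := fun c =>
    (TensorProduct.assoc k H H (H ⊗[k] H)).symm.toLinearMap ∘ₗ
      TensorProduct.mk k H (H ⊗[k] (H ⊗[k] H)) c with hψ
  have step2 : ∑ i ∈ r.index, ∑ p ∈ (rl i).index, ∑ m ∈ (rr i).index,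
      ((rl i).left p ⊗ₜ[k] (rl i).right p) ⊗ₜ[k] ((rr i).left m ⊗ₜ[k] (rr i).right m) =
      ∑ i ∈ r.index, ∑ m ∈ (rr i).index, ∑ n ∈ (rrl i m).index,
        (r.left i ⊗ₜ[k] (rrl i m).left n) ⊗ₜ[k] ((rrl i m).right n ⊗ₜ[k] (rr i).right m) := by
    calc ∑ i ∈ r.index, ∑ p ∈ (rl i).index, ∑ m ∈ (rr i).index,
        ((rl i).left p ⊗ₜ[k] (rl i).right p) ⊗ₜ[k] ((rr i).left m ⊗ₜ[k] (rr i).right m)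
        = ∑ i ∈ r.index, (Δ (r.left i)) ⊗ₜ[k] (Δ (r.right i)) := by
          refine Finset.sum_congr rfl fun i _ => ?_
          rw [← (rl i).eq, ← (rr i).eq, TensorProduct.sum_tmul]
          exact Finset.sum_congr rfl fun p _ => by rw [TensorProduct.tmul_sum]
      _ = (Coalgebra.comul.lTensor (H ⊗[k] H))
            ((Coalgebra.comul.rTensor H) (Δ a)) := by
          rw [← r.eq, map_sum, map_sum]
          exact Finset.sum_congr rfl fun i _ => by
            rw [LinearMap.rTensor_tmul, LinearMap.lTensor_tmul]
      _ = (Coalgebra.comul.lTensor (H ⊗[k] H))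
            ((TensorProduct.assoc k H H H).symm ((Coalgebra.comul.lTensor H) (Δ a))) := by
          rw [Coalgebra.coassoc_symm_apply]
      _ = ∑ i ∈ r.index, ψ (r.left i) ((Coalgebra.comul.lTensor H) (Δ (r.right i))) := by
          rw [← r.eq, map_sum, map_sum, map_sum]
          refine Finset.sum_congr rfl fun i _ => ?_
          rw [LinearMap.lTensor_tmul, ← (rr i).eq, TensorProduct.tmul_sum, map_sum, map_sum,
            map_sum]
          simp only [hψ, LinearMap.comp_apply, TensorProduct.mk_apply, map_sum]
          refine Finset.sum_congr rfl fun m _ => ?_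
          simp only [LinearMap.lTensor_tmul, LinearEquiv.coe_coe,
            TensorProduct.assoc_symm_tmul]
      _ = ∑ i ∈ r.index, ψ (r.left i)
            ((TensorProduct.assoc k H H H) ((Coalgebra.comul.rTensor H) (Δ (r.right i)))) := by
          exact Finset.sum_congr rfl fun i _ => by rw [Coalgebra.coassoc_apply]
      _ = ∑ i ∈ r.index, ∑ m ∈ (rr i).index, ∑ n ∈ (rrl i m).index,
            (r.left i ⊗ₜ[k] (rrl i m).left n) ⊗ₜ[k] ((rrl i m).right n ⊗ₜ[k] (rr i).right m) := by
          refine Finset.sum_congr rfl fun i _ => ?_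
          rw [← (rr i).eq, map_sum, map_sum, map_sum]
          refine Finset.sum_congr rfl fun m _ => ?_
          rw [LinearMap.rTensor_tmul, ← (rrl i m).eq, TensorProduct.sum_tmul, map_sum, map_sum]
          simp only [hψ, LinearMap.comp_apply, TensorProduct.mk_apply, map_sum]
          refine Finset.sum_congr rfl fun n _ => ?_
          simp only [LinearEquiv.coe_coe, TensorProduct.assoc_tmul,
            TensorProduct.assoc_symm_tmul]
  set Z : ((H ⊗[k] H) ⊗[k] (H ⊗[k] H)) →ₗ[k] H ⊗[k] H :=
    LinearMap.mul' k (H ⊗[k] H) ∘ₗ LinearMap.rTensor (H ⊗[k] H)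
      ((TensorProduct.comm k H H).toLinearMap ∘ₗ TensorProduct.map
        (HopfAlgebra.antipode (R := k)) (HopfAlgebra.antipode (R := k))) with hZ
  have hZpure : ∀ x y z w : H, Z ((x ⊗ₜ[k] y) ⊗ₜ[k] (z ⊗ₜ[k] w)) =
      (S y * z) ⊗ₜ[k] (S x * w) := by
    intro x y z w
    simp [hZ, Algebra.TensorProduct.tmul_mul_tmul]
  have key := congrArg Z step2
  rw [map_sum, map_sum] at key
  simp only [map_sum] at key
  calc ∑ i ∈ r.index, Gmap (r.left i) * Δ (r.right i)
      = ∑ i ∈ r.index, ∑ p ∈ (rl i).index, ∑ m ∈ (rr i).index,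
          Z (((rl i).left p ⊗ₜ[k] (rl i).right p) ⊗ₜ[k]
            ((rr i).left m ⊗ₜ[k] (rr i).right m)) := by
        refine Finset.sum_congr rfl fun i _ => ?_
        rw [show Gmap (r.left i) = ∑ p ∈ (rl i).index,
            S ((rl i).right p) ⊗ₜ[k] S ((rl i).left p) by
          rw [Gmap, LinearMap.comp_apply, LinearMap.comp_apply, ← (rl i).eq, map_sum, map_sum]
          simp]
        rw [← (rr i).eq, Finset.sum_mul_sum]
        refine Finset.sum_congr rfl fun p _ => Finset.sum_congr rfl fun m _ => ?_
        rw [hZpure, Algebra.TensorProduct.tmul_mul_tmul]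
    _ = ∑ i ∈ r.index, ∑ m ∈ (rr i).index, ∑ n ∈ (rrl i m).index,
          Z ((r.left i ⊗ₜ[k] (rrl i m).left n) ⊗ₜ[k]
            ((rrl i m).right n ⊗ₜ[k] (rr i).right m)) := key
    _ = ∑ i ∈ r.index, ∑ m ∈ (rr i).index,
          (1 : H) ⊗ₜ[k] ((ε ((rr i).left m)) • (S (r.left i) * (rr i).right m)) := by
        refine Finset.sum_congr rfl fun i _ => Finset.sum_congr rfl fun m _ => ?_
        calc ∑ n ∈ (rrl i m).index, Z ((r.left i ⊗ₜ[k] (rrl i m).left n) ⊗ₜ[k]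
              ((rrl i m).right n ⊗ₜ[k] (rr i).right m))
            = (∑ n ∈ (rrl i m).index, S ((rrl i m).left n) * (rrl i m).right n) ⊗ₜ[k]
                (S (r.left i) * (rr i).right m) := by
              rw [TensorProduct.sum_tmul]
              exact Finset.sum_congr rfl fun n _ => hZpure _ _ _ _
          _ = (1 : H) ⊗ₜ[k] ((ε ((rr i).left m)) • (S (r.left i) * (rr i).right m)) := by
              rw [HopfAlgebra.sum_antipode_mul_eq_smul (rrl i m), TensorProduct.smul_tmul]
    _ = cunit a := by
        have : ∀ i ∈ r.index, ∑ m ∈ (rr i).index,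
            (1 : H) ⊗ₜ[k] ((ε ((rr i).left m)) • (S (r.left i) * (rr i).right m)) =
            (1 : H) ⊗ₜ[k] (S (r.left i) * r.right i) := by
          intro i _
          rw [← TensorProduct.tmul_sum]
          congr 1
          calc ∑ m ∈ (rr i).index, (ε ((rr i).left m)) • (S (r.left i) * (rr i).right m)
              = S (r.left i) * ∑ m ∈ (rr i).index, (ε ((rr i).left m)) • (rr i).right m := by
                rw [Finset.mul_sum]
                exact Finset.sum_congr rfl fun m _ => (mul_smul_comm _ _ _).symm
            _ = S (r.left i) * r.right i := by rw [sum_counit_smul_eq (rr i)]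
        rw [Finset.sum_congr rfl this, ← TensorProduct.tmul_sum,
          HopfAlgebra.sum_antipode_mul_eq_smul r, cunit_apply, TensorProduct.tmul_smul,
          Algebra.TensorProduct.one_def]

theorem comul_antipode (a : H) :
    Δ (S a) = (TensorProduct.comm k H H) (TensorProduct.map
      (HopfAlgebra.antipode (R := k)) (HopfAlgebra.antipode (R := k)) (Δ a)) := by
  have h := conv_inv_unique (claim2 (k := k) (H := H)) (claim1 (k := k) (H := H))
  have := congrArg (fun φ => φ a) h
  simpa [Gmap] using this.symm

end Hopf2


section GCsum

variable {k : Type*} [CommSemiring k] {H : Type*} [AddCommMonoid H] [Module k H] [Coalgebra k H]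

local notation "Δ" => Coalgebra.comul (R := k) (A := H)

/-- Generalized coassociativity in sum form: the `(12)(34)` grouping of the threefold
comultiplication equals the center-split grouping. -/
lemma gcsum {a : H} {ι : Type*} (r : Coalgebra.Repr k a ι)
    (rl : (i : ι) → Coalgebra.Repr k (r.left i) ι)
    (rr : (i : ι) → Coalgebra.Repr k (r.right i) ι)
    (rrl : (i : ι) → (m : ι) → Coalgebra.Repr k ((rr i).left m) ι) :
    ∑ i ∈ r.index, ∑ p ∈ (rl i).index, ∑ m ∈ (rr i).index,
      ((rl i).left p ⊗ₜ[k] (rl i).right p) ⊗ₜ[k] ((rr i).left m ⊗ₜ[k] (rr i).right m) =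
    ∑ i ∈ r.index, ∑ m ∈ (rr i).index, ∑ n ∈ (rrl i m).index,
      (r.left i ⊗ₜ[k] (rrl i m).left n) ⊗ₜ[k] ((rrl i m).right n ⊗ₜ[k] (rr i).right m) := by
  set ψ : H → (H ⊗[k] (H ⊗[k] H)) →ₗ[k] ((H ⊗[k] H) ⊗[k] (H ⊗[k] H)) := fun c =>
    (TensorProduct.assoc k H H (H ⊗[k] H)).symm.toLinearMap ∘ₗ
      TensorProduct.mk k H (H ⊗[k] (H ⊗[k] H)) c with hψ
  calc ∑ i ∈ r.index, ∑ p ∈ (rl i).index, ∑ m ∈ (rr i).index,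
      ((rl i).left p ⊗ₜ[k] (rl i).right p) ⊗ₜ[k] ((rr i).left m ⊗ₜ[k] (rr i).right m)
      = ∑ i ∈ r.index, (Δ (r.left i)) ⊗ₜ[k] (Δ (r.right i)) := by
        refine Finset.sum_congr rfl fun i _ => ?_
        rw [← (rl i).eq, ← (rr i).eq, TensorProduct.sum_tmul]
        exact Finset.sum_congr rfl fun p _ => by rw [TensorProduct.tmul_sum]
    _ = (Coalgebra.comul.lTensor (H ⊗[k] H)) ((Coalgebra.comul.rTensor H) (Δ a)) := by
        rw [← r.eq, map_sum, map_sum]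
        exact Finset.sum_congr rfl fun i _ => by
          rw [LinearMap.rTensor_tmul, LinearMap.lTensor_tmul]
    _ = (Coalgebra.comul.lTensor (H ⊗[k] H))
          ((TensorProduct.assoc k H H H).symm ((Coalgebra.comul.lTensor H) (Δ a))) := by
        rw [Coalgebra.coassoc_symm_apply]
    _ = ∑ i ∈ r.index, ψ (r.left i) ((Coalgebra.comul.lTensor H) (Δ (r.right i))) := by
        rw [← r.eq, map_sum, map_sum, map_sum]
        refine Finset.sum_congr rfl fun i _ => ?_
        rw [LinearMap.lTensor_tmul, ← (rr i).eq, TensorProduct.tmul_sum, map_sum, map_sum,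
          map_sum]
        simp only [hψ, LinearMap.comp_apply, TensorProduct.mk_apply, map_sum]
        refine Finset.sum_congr rfl fun m _ => ?_
        simp only [LinearMap.lTensor_tmul, LinearEquiv.coe_coe,
          TensorProduct.assoc_symm_tmul]
    _ = ∑ i ∈ r.index, ψ (r.left i)
          ((TensorProduct.assoc k H H H) ((Coalgebra.comul.rTensor H) (Δ (r.right i)))) := by
        exact Finset.sum_congr rfl fun i _ => by rw [Coalgebra.coassoc_apply]
    _ = ∑ i ∈ r.index, ∑ m ∈ (rr i).index, ∑ n ∈ (rrl i m).index,
          (r.left i ⊗ₜ[k] (rrl i m).left n) ⊗ₜ[k] ((rrl i m).right n ⊗ₜ[k] (rr i).right m) := by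
        refine Finset.sum_congr rfl fun i _ => ?_
        rw [← (rr i).eq, map_sum, map_sum, map_sum]
        refine Finset.sum_congr rfl fun m _ => ?_
        rw [LinearMap.rTensor_tmul, ← (rrl i m).eq, TensorProduct.sum_tmul, map_sum, map_sum]
        simp only [hψ, LinearMap.comp_apply, TensorProduct.mk_apply, map_sum]
        refine Finset.sum_congr rfl fun n _ => ?_
        simp only [LinearEquiv.coe_coe, TensorProduct.assoc_tmul,
          TensorProduct.assoc_symm_tmul]

end GCsum

section FT

variable {k : Type*} [Field k] {H : Type*} [AddCommGroup H] [Module k H] [Coalgebra k H]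

local notation "Δ" => Coalgebra.comul (R := k) (A := H)
local notation "ε" => Coalgebra.counit (R := k) (A := H)

lemma mem_range_map_of_mem_ranges {C : Submodule k H} {x : H ⊗[k] H}
    (h1 : x ∈ LinearMap.range (C.subtype.rTensor H))
    (h2 : x ∈ LinearMap.range (C.subtype.lTensor H)) :
    x ∈ LinearMap.range (TensorProduct.map C.subtype C.subtype) := by
  obtain ⟨D, hD⟩ := Submodule.exists_isCompl C
  set π := C.projectionOnto D hD with hπ
  set p := C.subtype ∘ₗ π with hp
  have hpι : p ∘ₗ C.subtype = C.subtype := by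
    ext y
    simp [hp, hπ, Submodule.projectionOnto_apply_left]
  obtain ⟨t1, ht1⟩ := h1
  obtain ⟨t2, ht2⟩ := h2
  have e2 : (p.lTensor H) x = x := by
    rw [← ht2, ← LinearMap.comp_apply, ← LinearMap.lTensor_comp, hpι]
  have e1 : (p.rTensor H) x = x := by
    rw [← ht1, ← LinearMap.comp_apply, ← LinearMap.rTensor_comp, hpι]
  have hmm : TensorProduct.map p p x = x := by
    rw [← LinearMap.rTensor_comp_lTensor, LinearMap.comp_apply, e2, e1]
  refine ⟨TensorProduct.map π π x, ?_⟩
  rw [← LinearMap.comp_apply, ← TensorProduct.map_comp, ← hp, hmm]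

lemma basis_sum_ext {ι : Type*} (B : Module.Basis ι k H) {x : H} {t : Finset ι}
    (h : (B.repr x).support ⊆ t) : ∑ i ∈ t, B.repr x i • B i = x := by
  classical
  rw [← Finset.sum_subset h (fun i _ hi => by
    rw [Finsupp.notMem_support_iff.mp hi, zero_smul])]
  have := B.linearCombination_repr x
  rw [Finsupp.linearCombination_apply, Finsupp.sum] at this
  exact this

lemma single_collapse {ι : Type*} (B : Module.Basis ι k H) {M : Type*} [AddCommGroup M]
    [Module k M] {s : Finset ι} {i₀ : ι} (hi₀ : i₀ ∈ s) (v : ι → M) :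
    ∑ i ∈ s, B.repr (B i) i₀ • v i = v i₀ := by
  classical
  rw [Finset.sum_eq_single_of_mem i₀ hi₀ (fun b _ hb => by
    rw [Module.Basis.repr_self, Finsupp.single_apply, if_neg hb, zero_smul])]
  rw [Module.Basis.repr_self, Finsupp.single_apply, if_pos rfl, one_smul]

lemma sum_counit_smul_eq' {a : H} {ι : Type*} (r : Coalgebra.Repr k a ι) :
    ∑ i ∈ r.index, (Coalgebra.counit (R := k) (r.left i)) • r.right i = a := by
  have h := congrArg (TensorProduct.lid k H) (Coalgebra.sum_counit_tmul_eq r)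
  rw [map_sum] at h
  simp only [TensorProduct.lid_tmul] at h
  simpa using h

set_option maxHeartbeats 1000000 in
theorem exists_fd_subcoalgebra (g : H) :
    ∃ C : Submodule k H, FiniteDimensional k C ∧ g ∈ C ∧
      ∀ x ∈ C, Δ x ∈ LinearMap.range (TensorProduct.map C.subtype C.subtype) := by
  classical
  set B := Module.Basis.ofVectorSpace k H with hB
  set T : H ⊗[k] (H ⊗[k] H) := (Coalgebra.comul (R := k) (A := H)).lTensor H (Δ g) with hT
  obtain ⟨s₁, hs₁⟩ := TensorProduct.exists_finset (R := k) T
  choose F hF using fun (w : H ⊗[k] H) => TensorProduct.exists_finset (R := k) w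
  set s : Finset _ := (s₁.biUnion fun p => (B.repr p.1).support) ∪
    (s₁.biUnion fun p => (F p.2).biUnion fun q => (B.repr q.2).support) with hs
  have hsupp1 : ∀ p ∈ s₁, (B.repr p.1).support ⊆ s := fun p hp => by
    intro i hi
    exact Finset.mem_union_left _ (Finset.mem_biUnion.mpr ⟨p, hp, hi⟩)
  have hsupp2 : ∀ p ∈ s₁, ∀ q ∈ F p.2, (B.repr q.2).support ⊆ s := fun p hp q hq => by
    intro j hj
    exact Finset.mem_union_right _
      (Finset.mem_biUnion.mpr ⟨p, hp, Finset.mem_biUnion.mpr ⟨q, hq, hj⟩⟩)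
  set χ : _ → _ → (H ⊗[k] (H ⊗[k] H)) →ₗ[k] H := fun i j =>
    ((TensorProduct.rid k H).toLinearMap ∘ₗ (B.coord j).lTensor H) ∘ₗ
    ((TensorProduct.lid k (H ⊗[k] H)).toLinearMap ∘ₗ (B.coord i).rTensor (H ⊗[k] H)) with hχ
  have χpure : ∀ i j (x y z : H), χ i j (x ⊗ₜ[k] (y ⊗ₜ[k] z)) =
      B.repr x i • (B.repr z j • y) := by
    intro i j x y z
    simp only [hχ, LinearMap.comp_apply, LinearMap.rTensor_tmul, LinearEquiv.coe_coe,
      TensorProduct.lid_tmul, Module.Basis.coord_apply, map_smul, LinearMap.lTensor_tmul,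
      TensorProduct.rid_tmul, TensorProduct.smul_tmul']
    rw [smul_comm]
  set c : _ → _ → H := fun i j => χ i j T with hcdef
  have hT2 : T = ∑ p ∈ s₁, ∑ q ∈ F p.2, p.1 ⊗ₜ[k] (q.1 ⊗ₜ[k] q.2) := by
    rw [hs₁]
    exact Finset.sum_congr rfl fun p _ => by rw [← TensorProduct.tmul_sum, ← hF p.2]
  have hc : ∀ i j, c i j = ∑ p ∈ s₁, ∑ q ∈ F p.2,
      (B.repr p.1 i * B.repr q.2 j) • q.1 := by
    intro i j
    rw [hcdef]
    simp only [hT2, map_sum]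
    refine Finset.sum_congr rfl fun p _ => Finset.sum_congr rfl fun q _ => ?_
    rw [χpure, smul_smul, mul_comm]
  have recon : T = ∑ i ∈ s, ∑ j ∈ s, B i ⊗ₜ[k] ((c i j) ⊗ₜ[k] B j) := by
    have expand : ∀ (x y z : H), (B.repr x).support ⊆ s → (B.repr z).support ⊆ s →
        x ⊗ₜ[k] (y ⊗ₜ[k] z) =
        ∑ i ∈ s, ∑ j ∈ s, (B.repr x i * B.repr z j) • (B i ⊗ₜ[k] (y ⊗ₜ[k] B j)) := by
      intro x y z hx hz
      conv_lhs => rw [← basis_sum_ext B hx, ← basis_sum_ext B hz]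
      rw [TensorProduct.sum_tmul]
      refine Finset.sum_congr rfl fun i _ => ?_
      rw [← TensorProduct.smul_tmul', TensorProduct.tmul_sum, TensorProduct.tmul_sum,
        Finset.smul_sum]
      refine Finset.sum_congr rfl fun j _ => ?_
      rw [TensorProduct.tmul_smul, TensorProduct.tmul_smul, smul_smul]
    calc T = ∑ p ∈ s₁, ∑ q ∈ F p.2, ∑ i ∈ s, ∑ j ∈ s,
          (B.repr p.1 i * B.repr q.2 j) • (B i ⊗ₜ[k] (q.1 ⊗ₜ[k] B j)) := by
          rw [hT2]
          exact Finset.sum_congr rfl fun p hp => Finset.sum_congr rfl fun q hq =>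
            expand p.1 q.1 q.2 (hsupp1 p hp) (hsupp2 p hp q hq)
      _ = ∑ i ∈ s, ∑ j ∈ s, ∑ p ∈ s₁, ∑ q ∈ F p.2,
          (B.repr p.1 i * B.repr q.2 j) • (B i ⊗ₜ[k] (q.1 ⊗ₜ[k] B j)) := by
          rw [Finset.sum_congr rfl fun p (_ : p ∈ s₁) => Finset.sum_comm, Finset.sum_comm]
          refine Finset.sum_congr rfl fun i _ => ?_
          rw [Finset.sum_congr rfl fun p (_ : p ∈ s₁) => Finset.sum_comm, Finset.sum_comm]
      _ = ∑ i ∈ s, ∑ j ∈ s, B i ⊗ₜ[k] ((c i j) ⊗ₜ[k] B j) := by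
          refine Finset.sum_congr rfl fun i _ => Finset.sum_congr rfl fun j _ => ?_
          rw [hc i j, TensorProduct.sum_tmul, TensorProduct.tmul_sum]
          refine Finset.sum_congr rfl fun p _ => ?_
          rw [TensorProduct.sum_tmul, TensorProduct.tmul_sum]
          refine Finset.sum_congr rfl fun q _ => ?_
          rw [← TensorProduct.smul_tmul', TensorProduct.tmul_smul]
  set C : Submodule k H := Submodule.span k ↑((s ×ˢ s).image fun ij => c ij.1 ij.2) with hC
  have hcmem : ∀ i ∈ s, ∀ j ∈ s, c i j ∈ C := fun i hi j hj =>
    Submodule.subset_span (by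
      simp only [Finset.coe_image, Set.mem_image, Finset.mem_coe, Finset.mem_product]
      exact ⟨(i, j), ⟨hi, hj⟩, rfl⟩)
  have hfd : FiniteDimensional k C := by
    rw [hC]; infer_instance
  set ρ : H ⊗[k] (H ⊗[k] H) →ₗ[k] H :=
    ((TensorProduct.rid k H).toLinearMap ∘ₗ (Coalgebra.counit (R := k)).lTensor H) ∘ₗ
    ((TensorProduct.lid k (H ⊗[k] H)).toLinearMap ∘ₗ
      (Coalgebra.counit (R := k)).rTensor (H ⊗[k] H)) with hρ
  have ρpure : ∀ (x y z : H), ρ (x ⊗ₜ[k] (y ⊗ₜ[k] z)) = ε x • (ε z • y) := by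
    intro x y z
    simp only [hρ, LinearMap.comp_apply, LinearMap.rTensor_tmul, LinearEquiv.coe_coe,
      TensorProduct.lid_tmul, map_smul, LinearMap.lTensor_tmul, TensorProduct.rid_tmul,
      TensorProduct.smul_tmul']
    rw [smul_comm]
  have hρT1 : ρ T = g := by
    rw [hT]
    set r := ℛ k g
    rw [← r.eq, map_sum, map_sum]
    have : ∀ i ∈ r.index, ρ ((LinearMap.lTensor H (Coalgebra.comul (R := k)))
        (r.left i ⊗ₜ[k] r.right i)) = ε (r.left i) • r.right i := by
      intro i _
      rw [LinearMap.lTensor_tmul]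
      calc ρ (r.left i ⊗ₜ[k] Coalgebra.comul (r.right i))
          = ε (r.left i) • (TensorProduct.rid k H)
              ((Coalgebra.counit (R := k)).lTensor H (Coalgebra.comul (r.right i))) := by
            simp only [hρ, LinearMap.comp_apply, LinearMap.rTensor_tmul, LinearEquiv.coe_coe,
              TensorProduct.lid_tmul, map_smul]
        _ = ε (r.left i) • r.right i := by
            rw [Coalgebra.lTensor_counit_comul, TensorProduct.rid_tmul, one_smul]
    rw [Finset.sum_congr rfl this]
    exact sum_counit_smul_eq' r
  have hgC : g ∈ C := by
    rw [← hρT1, recon, map_sum]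
    refine Submodule.sum_mem _ fun i hi => ?_
    rw [map_sum]
    refine Submodule.sum_mem _ fun j hj => ?_
    rw [ρpure]
    exact Submodule.smul_mem _ _ (Submodule.smul_mem _ _ (hcmem i hi j hj))
  -- the fourfold splitting maps
  set M4 : H ⊗[k] ((H ⊗[k] H) ⊗[k] H) :=
    LinearMap.lTensor H (LinearMap.rTensor H (Coalgebra.comul (R := k))) T with hM4
  set N4 : (H ⊗[k] H) ⊗[k] (H ⊗[k] H) :=
    LinearMap.rTensor (H ⊗[k] H) (Coalgebra.comul (R := k)) T with hN4
  set θmap : ((H ⊗[k] H) ⊗[k] (H ⊗[k] H)) →ₗ[k] (H ⊗[k] ((H ⊗[k] H) ⊗[k] H)) :=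
    LinearMap.lTensor H ((TensorProduct.assoc k H H H).symm.toLinearMap) ∘ₗ
      (TensorProduct.assoc k H H (H ⊗[k] H)).toLinearMap with hθ
  have θpure : ∀ (u v y z : H), θmap ((u ⊗ₜ[k] v) ⊗ₜ[k] (y ⊗ₜ[k] z)) =
      u ⊗ₜ[k] ((v ⊗ₜ[k] y) ⊗ₜ[k] z) := by
    intro u v y z
    simp only [hθ, LinearMap.comp_apply, LinearEquiv.coe_coe, TensorProduct.assoc_tmul,
      LinearMap.lTensor_tmul, TensorProduct.assoc_symm_tmul]
  set χ4 : _ → _ → (H ⊗[k] ((H ⊗[k] H) ⊗[k] H)) →ₗ[k] (H ⊗[k] H) := fun i j =>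
    ((TensorProduct.rid k (H ⊗[k] H)).toLinearMap ∘ₗ (B.coord j).lTensor (H ⊗[k] H)) ∘ₗ
    ((TensorProduct.lid k ((H ⊗[k] H) ⊗[k] H)).toLinearMap ∘ₗ
      (B.coord i).rTensor ((H ⊗[k] H) ⊗[k] H)) with hχ4
  have χ4pure : ∀ i j (x : H) (t : H ⊗[k] H) (z : H),
      χ4 i j (x ⊗ₜ[k] (t ⊗ₜ[k] z)) = B.repr x i • (B.repr z j • t) := by
    intro i j x t z
    simp only [hχ4, LinearMap.comp_apply, LinearMap.rTensor_tmul, LinearEquiv.coe_coe,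
      TensorProduct.lid_tmul, Module.Basis.coord_apply, map_smul, LinearMap.lTensor_tmul,
      TensorProduct.rid_tmul, TensorProduct.smul_tmul']
    rw [smul_comm]
  -- representation data for the basis vectors
  set rB : (j : _) → Coalgebra.Repr k (B j) (H × H) := fun j => ℛ k (B j) with hrB
  -- E1 : χ4 recovers Δ(c i j) from M4
  have hM4rec : M4 = ∑ i ∈ s, ∑ j ∈ s, B i ⊗ₜ[k] ((Δ (c i j)) ⊗ₜ[k] B j) := by
    rw [hM4, recon, map_sum]
    refine Finset.sum_congr rfl fun i _ => ?_
    rw [map_sum]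
    exact Finset.sum_congr rfl fun j _ => by
      rw [LinearMap.lTensor_tmul, LinearMap.rTensor_tmul]
  have hE1 : ∀ i₀ ∈ s, ∀ j₀ ∈ s, χ4 i₀ j₀ M4 = Δ (c i₀ j₀) := by
    intro i₀ hi₀ j₀ hj₀
    rw [hM4rec, map_sum]
    calc ∑ i ∈ s, χ4 i₀ j₀ (∑ j ∈ s, B i ⊗ₜ[k] ((Δ (c i j)) ⊗ₜ[k] B j))
        = ∑ i ∈ s, B.repr (B i) i₀ • (∑ j ∈ s, B.repr (B j) j₀ • Δ (c i j)) := by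
          refine Finset.sum_congr rfl fun i _ => ?_
          rw [map_sum, Finset.sum_congr rfl fun j (_ : j ∈ s) =>
            χ4pure i₀ j₀ (B i) (Δ (c i j)) (B j), ← Finset.smul_sum]
      _ = Δ (c i₀ j₀) := by
          rw [single_collapse B hi₀, single_collapse B hj₀]
  -- E2 : left components of Δ(c i₀ j₀) lie in C
  have hM4E2 : M4 = ∑ i ∈ s, ∑ j ∈ s, ∑ q ∈ (rB j).index,
      B i ⊗ₜ[k] (((c i j) ⊗ₜ[k] (rB j).left q) ⊗ₜ[k] (rB j).right q) := by
    have hM4' : M4 = LinearMap.lTensor H ((TensorProduct.assoc k H H H).symm.toLinearMap)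
        (LinearMap.lTensor H ((Coalgebra.comul (R := k)).lTensor H) T) := by
      rw [hM4, hT, ← LinearMap.lTensor_comp_apply, ← LinearMap.lTensor_comp_apply,
        ← LinearMap.lTensor_comp_apply, ← Coalgebra.coassoc_symm, LinearMap.comp_assoc]
    rw [hM4', recon, map_sum, map_sum]
    refine Finset.sum_congr rfl fun i _ => ?_
    rw [map_sum, map_sum]
    refine Finset.sum_congr rfl fun j _ => ?_
    rw [LinearMap.lTensor_tmul, LinearMap.lTensor_tmul, LinearMap.lTensor_tmul, ← (rB j).eq,
      TensorProduct.tmul_sum, map_sum, TensorProduct.tmul_sum]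
    refine Finset.sum_congr rfl fun q _ => ?_
    simp only [LinearEquiv.coe_coe, TensorProduct.assoc_symm_tmul]
  have hE2 : ∀ i₀ ∈ s, ∀ j₀ ∈ s,
      χ4 i₀ j₀ M4 ∈ LinearMap.range (C.subtype.rTensor H) := by
    intro i₀ hi₀ j₀ hj₀
    rw [hM4E2, map_sum]
    have step : ∀ i ∈ s, χ4 i₀ j₀ (∑ j ∈ s, ∑ q ∈ (rB j).index,
        B i ⊗ₜ[k] (((c i j) ⊗ₜ[k] (rB j).left q) ⊗ₜ[k] (rB j).right q)) =
        B.repr (B i) i₀ • ∑ j ∈ s, ∑ q ∈ (rB j).index,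
          B.repr ((rB j).right q) j₀ • ((c i j) ⊗ₜ[k] (rB j).left q) := by
      intro i _
      rw [map_sum]
      rw [Finset.sum_congr rfl fun j (_ : j ∈ s) => map_sum (χ4 i₀ j₀) _ ((rB j).index)]
      rw [Finset.sum_congr rfl fun j (_ : j ∈ s) => Finset.sum_congr rfl
        fun q (_ : q ∈ (rB j).index) => χ4pure i₀ j₀ (B i) _ _]
      rw [Finset.sum_congr rfl fun j (_ : j ∈ s) => (Finset.smul_sum).symm,
        ← Finset.smul_sum]
    rw [Finset.sum_congr rfl step, single_collapse B hi₀]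
    refine Submodule.sum_mem _ fun j hj => Submodule.sum_mem _ fun q _ => ?_
    refine Submodule.smul_mem _ _ ?_
    exact ⟨(⟨c i₀ j, hcmem i₀ hi₀ j hj⟩ : C) ⊗ₜ[k] (rB j).left q, rfl⟩
  -- E3 : right components of Δ(c i₀ j₀) lie in C
  set r := ℛ k g with hrg
  set rl : (i : H × H) → Coalgebra.Repr k (r.left i) (H × H) := fun i => ℛ k (r.left i) with hrl
  set rr : (i : H × H) → Coalgebra.Repr k (r.right i) (H × H) := fun i => ℛ k (r.right i) with hrr
  set rrl : (i : H × H) → (m : H × H) → Coalgebra.Repr k ((rr i).left m) (H × H) :=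
    fun i m => ℛ k ((rr i).left m) with hrrl
  have hT3 : T = ∑ i ∈ r.index, r.left i ⊗ₜ[k] (Δ (r.right i)) := by
    rw [hT, ← r.eq, map_sum]
    exact Finset.sum_congr rfl fun i _ => by rw [LinearMap.lTensor_tmul]
  have hN4B : N4 = ∑ i ∈ r.index, ∑ p ∈ (rl i).index, ∑ m ∈ (rr i).index,
      ((rl i).left p ⊗ₜ[k] (rl i).right p) ⊗ₜ[k] ((rr i).left m ⊗ₜ[k] (rr i).right m) := by
    rw [hN4, hT3, map_sum]
    refine Finset.sum_congr rfl fun i _ => ?_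
    rw [LinearMap.rTensor_tmul, ← (rl i).eq, ← (rr i).eq, TensorProduct.sum_tmul]
    exact Finset.sum_congr rfl fun p _ => by rw [TensorProduct.tmul_sum]
  have hM4B : M4 = ∑ i ∈ r.index, ∑ m ∈ (rr i).index, ∑ n ∈ (rrl i m).index,
      r.left i ⊗ₜ[k] (((rrl i m).left n ⊗ₜ[k] (rrl i m).right n) ⊗ₜ[k] (rr i).right m) := by
    rw [hM4, hT3, map_sum]
    refine Finset.sum_congr rfl fun i _ => ?_
    rw [LinearMap.lTensor_tmul, ← (rr i).eq, map_sum, TensorProduct.tmul_sum]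
    refine Finset.sum_congr rfl fun m _ => ?_
    rw [LinearMap.rTensor_tmul, ← (rrl i m).eq, TensorProduct.sum_tmul,
      TensorProduct.tmul_sum]
  have hGC : θmap N4 = M4 := by
    rw [hN4B, gcsum r rl rr rrl, map_sum, hM4B]
    refine Finset.sum_congr rfl fun i _ => ?_
    rw [map_sum]
    refine Finset.sum_congr rfl fun m _ => ?_
    rw [map_sum]
    refine Finset.sum_congr rfl fun n _ => ?_
    rw [θpure]
  have hN4rec : N4 = ∑ i ∈ s, ∑ j ∈ s, ∑ p ∈ (rB i).index,
      ((rB i).left p ⊗ₜ[k] (rB i).right p) ⊗ₜ[k] ((c i j) ⊗ₜ[k] B j) := by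
    rw [hN4, recon, map_sum]
    refine Finset.sum_congr rfl fun i _ => ?_
    rw [map_sum]
    refine Finset.sum_congr rfl fun j _ => ?_
    rw [LinearMap.rTensor_tmul, ← (rB i).eq, TensorProduct.sum_tmul]
  have hE3 : ∀ i₀ ∈ s, ∀ j₀ ∈ s,
      χ4 i₀ j₀ M4 ∈ LinearMap.range (C.subtype.lTensor H) := by
    intro i₀ hi₀ j₀ hj₀
    have combo : ∀ (u v y z : H), χ4 i₀ j₀ (θmap ((u ⊗ₜ[k] v) ⊗ₜ[k] (y ⊗ₜ[k] z))) =
        B.repr u i₀ • (B.repr z j₀ • (v ⊗ₜ[k] y)) := by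
      intro u v y z
      rw [θpure, χ4pure]
    have val : χ4 i₀ j₀ M4 = ∑ i ∈ s, ∑ p ∈ (rB i).index,
        B.repr ((rB i).left p) i₀ • ((rB i).right p ⊗ₜ[k] c i j₀) := by
      calc χ4 i₀ j₀ M4
          = ∑ i ∈ s, ∑ j ∈ s, ∑ p ∈ (rB i).index,
              B.repr ((rB i).left p) i₀ • (B.repr (B j) j₀ •
                ((rB i).right p ⊗ₜ[k] c i j)) := by
            rw [← hGC, hN4rec, map_sum, map_sum]
            refine Finset.sum_congr rfl fun i _ => ?_
            rw [map_sum, map_sum]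
            refine Finset.sum_congr rfl fun j _ => ?_
            rw [map_sum, map_sum]
            exact Finset.sum_congr rfl fun p _ => combo _ _ _ _
        _ = ∑ i ∈ s, ∑ p ∈ (rB i).index, B.repr ((rB i).left p) i₀ •
              ((rB i).right p ⊗ₜ[k] c i j₀) := by
            rw [Finset.sum_congr rfl fun i (_ : i ∈ s) => Finset.sum_comm]
            refine Finset.sum_congr rfl fun i _ => Finset.sum_congr rfl fun p _ => ?_
            rw [← Finset.smul_sum, single_collapse B hj₀ (fun j => (rB i).right p ⊗ₜ[k] c i j)]
    rw [val]
    refine Submodule.sum_mem _ fun i hi => Submodule.sum_mem _ fun p _ => ?_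
    refine Submodule.smul_mem _ _ ?_
    exact ⟨(rB i).right p ⊗ₜ[k] (⟨c i j₀, hcmem i hi j₀ hj₀⟩ : C), rfl⟩
  -- assembly
  refine ⟨C, hfd, hgC, fun x hx => ?_⟩
  have hsub : C ≤ Submodule.comap (Coalgebra.comul (R := k))
      (LinearMap.range (TensorProduct.map C.subtype C.subtype)) := by
    rw [hC, Submodule.span_le]
    rintro y hy
    simp only [Finset.coe_image, Set.mem_image, Finset.mem_coe, Finset.mem_product] at hy
    obtain ⟨⟨i, j⟩, ⟨hi, hj⟩, rfl⟩ := hy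
    simp only [Submodule.mem_comap, SetLike.mem_coe]
    rw [← hE1 i hi j hj]
    exact mem_range_map_of_mem_ranges (hE2 i hi j hj) (hE3 i hi j hj)
  exact hsub hx

end FT

section Main

variable {k : Type*} [Field k] {H A : Type*} [Ring H] [HopfAlgebra k H]
  [Ring A] [Algebra k A]

local notation "S" => HopfAlgebra.antipode (R := k) (A := H)

lemma IsRightIdeal.smul_mem {I : Set A} (hI : IsRightIdeal I) {x : A} (hx : x ∈ I) (t : k) :
    t • x ∈ I := by
  have : t • x = x * algebraMap k A t := by
    rw [Algebra.smul_def, Algebra.commutes]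
  rw [this]
  exact hI.2.2 x hx _

lemma IsRightIdeal.sum_mem {I : Set A} (hI : IsRightIdeal I) {β : Type*} {s : Finset β}
    {f : β → A} (hf : ∀ b ∈ s, f b ∈ I) : ∑ b ∈ s, f b ∈ I := by
  classical
  induction s using Finset.induction_on with
  | empty => simpa using hI.1
  | insert _ _ hnot ih =>
    rw [Finset.sum_insert hnot]
    exact hI.2.1 _ (hf _ (Finset.mem_insert_self _ _)) _
      (ih fun b hb => hf b (Finset.mem_insert_of_mem hb))

lemma isRightIdeal_univ : IsRightIdeal (Set.univ : Set A) :=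
  ⟨trivial, fun _ _ _ _ => trivial, fun _ _ _ => trivial⟩

lemma isEssential_univ : IsEssentialRightIdeal (Set.univ : Set A) :=
  ⟨isRightIdeal_univ, fun _ _ ⟨y, hy, hy0⟩ => ⟨y, trivial, hy, hy0⟩⟩

lemma IsRightIdeal.inter {I J : Set A} (hI : IsRightIdeal I) (hJ : IsRightIdeal J) :
    IsRightIdeal (I ∩ J) :=
  ⟨⟨hI.1, hJ.1⟩, fun x hx y hy => ⟨hI.2.1 x hx.1 y hy.1, hJ.2.1 x hx.2 y hy.2⟩,
    fun x hx a => ⟨hI.2.2 x hx.1 a, hJ.2.2 x hx.2 a⟩⟩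

lemma IsEssentialRightIdeal.inter {I J : Set A} (hI : IsEssentialRightIdeal I)
    (hJ : IsEssentialRightIdeal J) : IsEssentialRightIdeal (I ∩ J) := by
  refine ⟨hI.1.inter hJ.1, fun K hK hK0 => ?_⟩
  obtain ⟨y, hyJ, hyK, hy0⟩ := hJ.2 K hK hK0
  obtain ⟨x, hxI, ⟨hxJ, hxK⟩, hx0⟩ := hI.2 (J ∩ K) (hJ.1.inter hK) ⟨y, ⟨hyJ, hyK⟩, hy0⟩
  exact ⟨x, ⟨hxI, hxJ⟩, hxK, hx0⟩

lemma essential_finset_inter {β : Type*} (s : Finset β) (Js : β → Set A)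
    (h : ∀ b ∈ s, IsEssentialRightIdeal (Js b)) :
    IsEssentialRightIdeal {x : A | ∀ b ∈ s, x ∈ Js b} := by
  classical
  induction s using Finset.induction_on with
  | empty => simpa using isEssential_univ
  | @insert a s hnot ih =>
    have : {x : A | ∀ b ∈ insert a s, x ∈ Js b} = Js a ∩ {x : A | ∀ b ∈ s, x ∈ Js b} := by
      ext x
      simp [Set.mem_inter_iff, forall_and]
    rw [this]
    exact (h a (Finset.mem_insert_self _ _)).inter
      (ih fun b hb => h b (Finset.mem_insert_of_mem hb))

lemma IsEssentialRightIdeal.of_superset {I J : Set A} (hJ : IsEssentialRightIdeal J)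
    (hI : IsRightIdeal I) (hsub : J ⊆ I) : IsEssentialRightIdeal I := by
  refine ⟨hI, fun K hK hK0 => ?_⟩
  obtain ⟨x, hxJ, hxK, hx0⟩ := hJ.2 K hK hK0
  exact ⟨x, hsub hxJ, hxK, hx0⟩

variable (act : H →ₗ[k] A →ₗ[k] A)

lemma iscSet_isRightIdeal (hact : IsModuleAlgebra k act) {I : Set A} (hI : IsRightIdeal I)
    {C : Submodule k H} (hC : IsSubcoalgebra k C) :
    IsRightIdeal (IscSet k act I C) := by
  refine ⟨fun c _ => by simpa using hI.1, ?_, ?_⟩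
  · intro x hx y hy c hc
    rw [map_add]
    exact hI.2.1 _ (hx c hc) _ (hy c hc)
  · intro x hx a c hc
    obtain ⟨t, ht⟩ := hC c hc
    obtain ⟨s₂, hs₂⟩ := TensorProduct.exists_finset (R := k) t
    have hcomul : Coalgebra.comul (R := k) c =
        ∑ p ∈ s₂, (p.1 : H) ⊗ₜ[k] (p.2 : H) := by
      rw [← ht, hs₂, map_sum]
      exact Finset.sum_congr rfl fun p _ => by rw [TensorProduct.map_tmul]; rfl
    have hSc : Coalgebra.comul (R := k) (S c) =
        ∑ p ∈ s₂, (S (p.2 : H)) ⊗ₜ[k] (S (p.1 : H)) := by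
      rw [comul_antipode, hcomul, map_sum, map_sum]
      exact Finset.sum_congr rfl fun p _ => by
        rw [TensorProduct.map_tmul, TensorProduct.comm_tmul]
    rw [hact.2.2.1 (S c) x a, hSc, map_sum, map_sum]
    refine hI.sum_mem fun p _ => ?_
    rw [TensorProduct.map_tmul, LinearMap.mul'_apply, LinearMap.flip_apply,
      LinearMap.flip_apply]
    exact hI.2.2 _ (hx (p.2 : H) (p.2).2) _

lemma act_antipode_submodule (hact : IsModuleAlgebra k act) {I : Set A}
    (hI : IsRightIdeal I) (x : A) (g : H) :
    ∃ D : Submodule k H, (D : Set H) = {c : H | act (S (g * c)) x ∈ I} := by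
  refine ⟨⟨⟨⟨{c : H | act (S (g * c)) x ∈ I}, ?_⟩, ?_⟩, ?_⟩, rfl⟩
  · intro c c' hc hc'
    have : act (S (g * (c + c'))) x = act (S (g * c)) x + act (S (g * c')) x := by
      rw [mul_add, map_add, map_add, LinearMap.add_apply]
    simpa [Set.mem_setOf_eq, this] using hI.2.1 _ hc _ hc'
  · have : act (S (g * (0 : H))) x = 0 := by
      rw [mul_zero, map_zero, map_zero, LinearMap.zero_apply]
    simpa [Set.mem_setOf_eq, this] using hI.1
  · intro t c hc
    have : act (S (g * (t • c))) x = t • act (S (g * c)) x := by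
      rw [mul_smul_comm, map_smul, map_smul, LinearMap.smul_apply]
    simpa [Set.mem_setOf_eq, this] using hI.smul_mem hc t

end Main

/-- A right ideal `I` of `A` belongs to `E'_H` iff `I_{S(C)}` is an
essential right ideal for every finite-dimensional subcoalgebra `C` of `H`; moreover,
if `I ∈ E'_H` then `I_{S(C)} ∈ E'_H` for every finite-dimensional subcoalgebra `C`. -/
theorem memEH_iff_isc_essential (k : Type*) [Field k] {H A : Type*} [Ring H]
    [HopfAlgebra k H] [Ring A] [Algebra k A] (act : H →ₗ[k] A →ₗ[k] A)
    (hact : IsModuleAlgebra k act) (I : Set A) (hI : IsRightIdeal I) :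
    (MemEH k act I ↔
      ∀ C : Submodule k H, IsSubcoalgebra k C → FiniteDimensional k C →
        IsEssentialRightIdeal (IscSet k act I C)) ∧
    (MemEH k act I →
      ∀ C : Submodule k H, IsSubcoalgebra k C → FiniteDimensional k C →
        MemEH k act (IscSet k act I C)) := by
  classical
  have hJall : ∀ hm : MemEH k act I, ∀ b : H, ∃ J : Set A, IsEssentialRightIdeal J ∧
      ∀ x ∈ J, act (HopfAlgebra.antipode (R := k) b) x ∈ I :=
    fun hm b => hm.2 _ ⟨b, rfl⟩
  constructor
  · constructor
    · intro hm C hC hfd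
      choose J hJe hJs using hJall hm
      obtain ⟨t, ht⟩ := (Submodule.fg_iff_finiteDimensional C).mpr hfd
      have hess := essential_finset_inter (A := A) t (fun b => J b) (fun b _ => hJe b)
      refine hess.of_superset (iscSet_isRightIdeal act hact hI hC) ?_
      intro x hx c hc
      obtain ⟨D, hD⟩ := act_antipode_submodule act hact hI x 1
      have hCD : C ≤ D := by
        rw [← ht]
        refine Submodule.span_le.mpr fun b hb => ?_
        show b ∈ (D : Set H)
        rw [hD]
        simpa [one_mul] using hJs b x (hx b hb)
      have hcD : c ∈ (D : Set H) := hCD hc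
      rw [hD] at hcD
      simpa [one_mul] using hcD
    · intro hiff
      refine ⟨hI, ?_⟩
      rintro h ⟨g, rfl⟩
      obtain ⟨C, hfd, hgC, hsub⟩ := exists_fd_subcoalgebra (k := k) g
      exact ⟨IscSet k act I C, hiff C (fun c hc => hsub c hc) hfd, fun x hxJ => hxJ g hgC⟩
  · intro hm C hC hfd
    refine ⟨iscSet_isRightIdeal act hact hI hC, ?_⟩
    rintro h ⟨g, rfl⟩
    choose J hJe hJs using hJall hm
    obtain ⟨t, ht⟩ := (Submodule.fg_iff_finiteDimensional C).mpr hfd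
    refine ⟨{x : A | ∀ b ∈ t, x ∈ J (g * b)},
      essential_finset_inter t _ (fun b _ => hJe (g * b)), ?_⟩
    intro x hx c hc
    obtain ⟨D, hD⟩ := act_antipode_submodule act hact hI x g
    have hCD : C ≤ D := by
      rw [← ht]
      refine Submodule.span_le.mpr fun b hb => ?_
      show b ∈ (D : Set H)
      rw [hD]
      exact hJs (g * b) x (hx b hb)
    have hcD : c ∈ (D : Set H) := hCD hc
    rw [hD] at hcD
    have key : act (HopfAlgebra.antipode (R := k) c)
        (act (HopfAlgebra.antipode (R := k) g) x) =
        act (HopfAlgebra.antipode (R := k) (g * c)) x := by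
      rw [antipode_mul' g c, hact.1]
      rfl
    rw [key]
    exact hcD
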